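/- arXiv:1703.08734 — 6 statements merged into one kernel-verified Lean document; each statement's English description precedes it below -/
import Mathlib

section
/- The matrix wreath product A ≀ B = B ⊕ Lin(B, B⊗_F A), equipped with the multiplication of B, the multiplication fg = (1⊗μ)∘(f⊗1)∘g on Lin(B, B⊗_F A), and the B-actions (fb)(b') = f(bb'), (bf)(b') = (b⊗1)f(b'), is an associative F-algebra. -/
open TensorProduct

noncomputable section

universe u v w

/-- `pwAux mul x n = x^(n+1)` (left-normed powers) with respect to a multiplication `mul`. -/
def pwAux {P : Type*} (mul : P → P → P) (x : P) : ℕ → P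
  | 0 => x
  | n + 1 => mul x (pwAux mul x n)

/-- `pw mul x n = x^n` for `n ≥ 1`, with the junk value `pw mul x 0 = 0`. -/
def pw {P : Type*} [Zero P] (mul : P → P → P) (x : P) : ℕ → P
  | 0 => 0
  | n + 1 => pwAux mul x n

/-- Every element of `s` is nilpotent with respect to `mul`. -/
def IsNilMul {P : Type*} [Zero P] (mul : P → P → P) (s : Set P) : Prop :=
  ∀ x ∈ s, ∃ n : ℕ, 1 ≤ n ∧ pw mul x n = 0

/-- A (not necessarily unital) ring is nil iff every element is nilpotent. -/
def IsNilRing (R : Type*) [NonUnitalRing R] : Prop :=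
  IsNilMul (· * ·) (Set.univ : Set R)

/-- Every element of `s` satisfies a nonzero polynomial over `F` with zero constant term. -/
def IsAlgebraicMul (F : Type*) [Field F] {P : Type*} [AddCommGroup P] [Module F P]
    (mul : P → P → P) (s : Set P) : Prop :=
  ∀ x ∈ s, ∃ p : Polynomial F, p ≠ 0 ∧ p.coeff 0 = 0 ∧ (p.sum fun i c => c • pw mul x i) = 0

/-- An `F`-algebra is algebraic iff every element satisfies a nonzero polynomial over `F`
with zero constant term (equivalently, generates a finite-dimensional subalgebra). -/
def IsAlgebraicRing (F : Type*) [Field F] (R : Type*) [NonUnitalRing R] [Module F R] : Prop :=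
  IsAlgebraicMul F (· * ·) (Set.univ : Set R)

/-- `R` is stable nil: all matrix algebras `M_n(R)` are nil. -/
def IsStableNil (R : Type*) [NonUnitalRing R] : Prop :=
  ∀ n : ℕ, IsNilRing (Matrix (Fin n) (Fin n) R)

/-- `R` is stable algebraic: all matrix algebras `M_n(R)` are algebraic over `F`. -/
def IsStableAlgebraic (F : Type*) [Field F] (R : Type*) [NonUnitalRing R] [Module F R] : Prop :=
  ∀ n : ℕ, IsAlgebraicRing F (Matrix (Fin n) (Fin n) R)

/-- A (not necessarily unital) ring is Jacobson radical iff every element `a` is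
quasi-regular: there is `a'` with `a + a' + aa' = 0` and `a + a' + a'a = 0`. -/
def IsJacobsonRadical (R : Type*) [NonUnitalRing R] : Prop :=
  ∀ a : R, ∃ a' : R, a + a' + a * a' = 0 ∧ a + a' + a' * a = 0

/-- `C` is finitely generated as a (non-unital) `F`-algebra. -/
def IsFinGenAlg (F : Type*) [Field F] (C : Type*) [NonUnitalRing C] [Module F C]
    [SMulCommClass F C C] [IsScalarTower F C C] : Prop :=
  ∃ s : Finset C, NonUnitalAlgebra.adjoin F (s : Set C) = ⊤

/-- `IsWord mul s k x` : `x` is a product (with some bracketing) of `k` factors from `s`. -/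
inductive IsWord {P : Type*} (mul : P → P → P) (s : Set P) : ℕ → P → Prop
  | base {x : P} : x ∈ s → IsWord mul s 1 x
  | mul {m n : ℕ} {x y : P} : IsWord mul s m x → IsWord mul s n y →
      IsWord mul s (m + n) (mul x y)

/-- The span `U^{≤n}` of all products of at most `n` factors from `U` (w.r.t. `mul`). -/
def wordSpan (F : Type*) [Field F] {P : Type*} [AddCommGroup P] [Module F P]
    (mul : P → P → P) (U : Submodule F P) (n : ℕ) : Submodule F P :=
  Submodule.span F {x | ∃ k, 1 ≤ k ∧ k ≤ n ∧ IsWord mul (U : Set P) k x}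

/-- The growth function `g(U, n) = dim_F U^{≤n}` of the subspace `U` w.r.t. `mul`. -/
def growthFn (F : Type*) [Field F] {P : Type*} [AddCommGroup P] [Module F P]
    (mul : P → P → P) (U : Submodule F P) (n : ℕ) : ℕ :=
  Module.finrank F (wordSpan F mul U n)

/-- `GKdimLE F R d` : the Gelfand–Kirillov dimension of the `F`-algebra `R` is at most `d`,
i.e. for every finite-dimensional subspace `U` and every `α > d` one has
`g(U, n) ≼ n^α`. -/
def GKdimLE (F : Type*) [Field F] (R : Type*) [NonUnitalRing R] [Module F R] (d : ℝ) : Prop :=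
  ∀ U : Submodule F R, FiniteDimensional F U → ∀ α : ℝ, d < α →
    ∃ c : ℕ, 0 < c ∧ ∀ n : ℕ, (growthFn F (· * ·) U n : ℝ) ≤ c * ((c * n : ℕ) : ℝ) ^ α

/-- `GKdimEQ F R d` : the Gelfand–Kirillov dimension of `R` is exactly `d`. -/
def GKdimEQ (F : Type*) [Field F] (R : Type*) [NonUnitalRing R] [Module F R] (d : ℝ) : Prop :=
  GKdimLE F R d ∧ ∀ e : ℝ, GKdimLE F R e → d ≤ e

section Wreath

variable (F : Type*) [Field F]
variable (A : Type*) [NonUnitalRing A] [Module F A] [SMulCommClass F A A] [IsScalarTower F A A]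
variable (B : Type*) [NonUnitalRing B] [Module F B] [SMulCommClass F B B] [IsScalarTower F B B]

/-- The multiplication `fg = (1 ⊗ μ) ∘ (f ⊗ 1) ∘ g` on `Lin(B, B ⊗ A)`. -/
def wrMul (f g : B →ₗ[F] B ⊗[F] A) : B →ₗ[F] B ⊗[F] A :=
  (LinearMap.lTensor B (LinearMap.mul' F A)) ∘ₗ (TensorProduct.assoc F B A A).toLinearMap ∘ₗ
    (LinearMap.rTensor A f) ∘ₗ g

/-- The left action of `B` on `Lin(B, B ⊗ A)` : `(bf)(b') = (b ⊗ 1) f(b')`. -/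
def actL (b : B) (f : B →ₗ[F] B ⊗[F] A) : B →ₗ[F] B ⊗[F] A :=
  (LinearMap.rTensor A (LinearMap.mulLeft F b)) ∘ₗ f

/-- The right action of `B` on `Lin(B, B ⊗ A)` : `(fb)(b') = f(bb')`. -/
def actR (f : B →ₗ[F] B ⊗[F] A) (b : B) : B →ₗ[F] B ⊗[F] A :=
  f ∘ₗ LinearMap.mulLeft F b

/-- The multiplication of the matrix wreath product `A ≀ B = B ⊕ Lin(B, B ⊗ A)`,
extending the multiplications of `B` and of `Lin(B, B ⊗ A)` via the two `B`-actions. -/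
def wm (x y : B × (B →ₗ[F] B ⊗[F] A)) : B × (B →ₗ[F] B ⊗[F] A) :=
  (x.1 * y.1, wrMul F A B x.2 y.2 + actL F A B x.1 y.2 + actR F A B x.2 y.1)

/-- `S(A,B)` : all `f : B → B ⊗ A` with `f(B) ⊆ V ⊗ A` for some finite-dimensional
subspace `V ⊆ B`. -/
def SAB : Set (B →ₗ[F] B ⊗[F] A) :=
  {f | ∃ V : Submodule F B, FiniteDimensional F V ∧
    LinearMap.range f ≤ LinearMap.range (LinearMap.rTensor A V.subtype)}

/-- The matrix entry `a_{ij}` of `f : B → B ⊗ A` w.r.t. a basis `β` of `B`, determined by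
`f(β j) = Σ_i (β i) ⊗ a_{ij}`. -/
def entryOf {I : Type*} [DecidableEq I] (β : Module.Basis I F B) (f : B →ₗ[F] B ⊗[F] A)
    (i j : I) : A :=
  (TensorProduct.finsuppScalarLeft F A I
    ((LinearMap.rTensor A β.repr.toLinearMap) (f (β j)))) i

/-- `M_∞(A)` : the elements of `Lin(B, B ⊗ A)` whose matrix w.r.t. the basis `β` has only
finitely many nonzero entries. -/
def MinfSet {I : Type*} [DecidableEq I] (β : Module.Basis I F B) : Set (B →ₗ[F] B ⊗[F] A) :=
  {f | {p : I × I | entryOf F A B β f p.1 p.2 ≠ 0}.Finite}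

end Wreath

section UnitalB

variable (F : Type*) [Field F]
variable (A : Type*) [NonUnitalRing A] [Module F A] [SMulCommClass F A A] [IsScalarTower F A A]
variable (B : Type*) [Ring B] [Algebra F B]

/-- The element `c_γ : b ↦ 1 ⊗ γ(b)` of `Lin(B, B ⊗ A)`. -/
def cgam (γ : B →ₗ[F] A) : B →ₗ[F] B ⊗[F] A :=
  (TensorProduct.mk F B A 1) ∘ₗ γ

/-- `GammaWord γ V k a` : `a` is a product `γ(v₁)⋯γ(v_r)` with `v_j ∈ V^{i_j}` and
`i₁ + ⋯ + i_r = k`, `i_j ≥ 1`. -/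
inductive GammaWord (γ : B →ₗ[F] A) (V : Submodule F B) : ℕ → A → Prop
  | base {i : ℕ} (hi : 1 ≤ i) {b : B} (hb : b ∈ wordSpan F (· * ·) V i) :
      GammaWord γ V i (γ b)
  | mul {m n : ℕ} {a a' : A} : GammaWord γ V m a → GammaWord γ V n a' →
      GammaWord γ V (m + n) (a * a')

/-- The subspace `W_n = Σ_{i₁+⋯+i_r ≤ n} γ(V^{i₁})⋯γ(V^{i_r})` of `A`. -/
def Wspan (γ : B →ₗ[F] A) (V : Submodule F B) (n : ℕ) : Submodule F A :=
  Submodule.span F {a | ∃ k, k ≤ n ∧ GammaWord F A B γ V k a}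

/-- `w_γ(n) = dim_F W_n`. -/
def wfn (γ : B →ₗ[F] A) (V : Submodule F B) (n : ℕ) : ℕ :=
  Module.finrank F (Wspan F A B γ V n)

end UnitalB

section PrimePrimitive

variable {P : Type v} [AddCommGroup P]

/-- `I` is a two-sided ideal of the subalgebra of the ambient algebra `(P, mul)` given by the
additive subgroup `T`. -/
def IsIdealIn (mul : P → P → P) (T I : AddSubgroup P) : Prop :=
  I ≤ T ∧ ∀ x ∈ T, ∀ y ∈ I, mul x y ∈ I ∧ mul y x ∈ I

/-- The subalgebra `T` of `(P, mul)` is a prime algebra: the product of two nonzero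
two-sided ideals is nonzero. -/
def IsPrimeIn (mul : P → P → P) (T : AddSubgroup P) : Prop :=
  ∀ I J : AddSubgroup P, IsIdealIn mul T I → IsIdealIn mul T J →
    (∀ a ∈ I, ∀ b ∈ J, mul a b = 0) → I = ⊥ ∨ J = ⊥

/-- The subalgebra `T` of `(P, mul)` is a (left) primitive algebra: it has a faithful
irreducible left module. -/
def IsPrimitiveIn (mul : P → P → P) (T : AddSubgroup P) : Prop :=
  ∃ (M : Type v) (_ : AddCommGroup M) (ρ : P → AddMonoid.End M),
    (∀ x ∈ T, ∀ y ∈ T, ρ (x + y) = ρ x + ρ y) ∧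
    (∀ x ∈ T, ∀ y ∈ T, ρ (mul x y) = ρ x * ρ y) ∧
    Set.InjOn ρ (T : Set P) ∧
    (∃ x ∈ T, ∃ m : M, (ρ x) m ≠ 0) ∧
    (∀ m : M, m ≠ 0 → ∀ y : M, ∃ x ∈ T, (ρ x) m = y)

end PrimePrimitive

/-- A (not necessarily unital) ring is (left) primitive: it has a faithful irreducible
left module. -/
def IsPrimitiveRing (R : Type v) [NonUnitalRing R] : Prop :=
  ∃ (M : Type v) (_ : AddCommGroup M) (ρ : R →ₙ+* AddMonoid.End M),
    Function.Injective ρ ∧ (∃ r : R, ∃ m : M, (ρ r) m ≠ 0) ∧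
    (∀ m : M, m ≠ 0 → ∀ y : M, ∃ r : R, (ρ r) m = y)

/-- The multiplication of `M_∞(A)`, realized as finitely supported `ℕ × ℕ` matrices over `A`. -/
def minfMul {A : Type*} [NonUnitalRing A] (x y : (ℕ × ℕ) →₀ A) : (ℕ × ℕ) →₀ A :=
  x.sum fun p a => y.sum fun q b => if p.2 = q.1 then Finsupp.single (p.1, q.2) (a * b) else 0

end

/-!
For `f : B → B ⊗ A` let `f̂ : B ⊗ A → B ⊗ A`, `b ⊗ a ↦ f(b) · a`, be its extension by right
multiplication. Then `fg = f̂ ∘ g`, and since `f̂` commutes with right multiplication by `A`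
(associativity of `A`), the extension of `fg` is `f̂ ∘ ĝ`: the product on `Lin(B, B ⊗ A)` is
composition in disguise, hence associative. The extension also commutes with `L_b ⊗ 1` and turns
precomposition by `L_b` into precomposition by `L_b ⊗ 1`, which gives the mixed associativity
laws with the two `B`-actions. Bilinearity holds because every ingredient of the product is a
composite of bilinear maps.
-/

section RTensorLift

variable {R A M N P : Type*} [CommSemiring R]
  [NonUnitalSemiring A] [Module R A] [SMulCommClass R A A] [IsScalarTower R A A]
  [AddCommMonoid M] [Module R M] [AddCommMonoid N] [Module R N] [AddCommMonoid P] [Module R P]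

/-- `m ⊗ a ↦ f(m) · a`; for unital `A` this is the `A`-linear extension of `f`. -/
noncomputable def rTensorLift : (M →ₗ[R] N ⊗[R] A) →ₗ[R] M ⊗[R] A →ₗ[R] N ⊗[R] A :=
  LinearMap.llcomp R (M ⊗[R] A) ((N ⊗[R] A) ⊗[R] A) (N ⊗[R] A)
      (LinearMap.lTensor N (LinearMap.mul' R A) ∘ₗ (TensorProduct.assoc R N A A).toLinearMap) ∘ₗ
    LinearMap.rTensorHom A

theorem rTensorLift_tmul (f : M →ₗ[R] N ⊗[R] A) (m : M) (a : A) :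
    rTensorLift f (m ⊗ₜ a) = (LinearMap.mulRight R a).lTensor N (f m) := by
  change LinearMap.lTensor N (LinearMap.mul' R A) (TensorProduct.assoc R N A A (f m ⊗ₜ a)) = _
  induction f m using TensorProduct.induction_on with
  | zero => simp
  | tmul n a' => simp
  | add t t' ht ht' => simp only [TensorProduct.add_tmul, map_add, ht, ht']

theorem rTensorLift_comp_lTensor_mulRight (f : M →ₗ[R] N ⊗[R] A) (a : A) :
    rTensorLift f ∘ₗ (LinearMap.mulRight R a).lTensor M =
      (LinearMap.mulRight R a).lTensor N ∘ₗ rTensorLift f := by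
  ext m a'
  simp [rTensorLift_tmul, LinearMap.mulRight_mul, LinearMap.lTensor_comp]

theorem rTensorLift_comp (f : N →ₗ[R] P ⊗[R] A) (g : M →ₗ[R] N ⊗[R] A) :
    rTensorLift (rTensorLift f ∘ₗ g) = rTensorLift f ∘ₗ rTensorLift g := by
  ext m a
  simpa [rTensorLift_tmul] using
    (LinearMap.congr_fun (rTensorLift_comp_lTensor_mulRight f a) (g m)).symm

theorem rTensorLift_rTensor_comp (φ : N →ₗ[R] P) (f : M →ₗ[R] N ⊗[R] A) :
    rTensorLift (φ.rTensor A ∘ₗ f) = φ.rTensor A ∘ₗ rTensorLift f := by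
  refine TensorProduct.ext' fun m a => ?_
  simp only [LinearMap.comp_apply, rTensorLift_tmul]
  exact LinearMap.congr_fun ((LinearMap.lTensor_comp_rTensor (f := φ) (g := .mulRight R a)).trans
    (LinearMap.rTensor_comp_lTensor (f := φ) (g := .mulRight R a)).symm) (f m)

theorem rTensorLift_comp_rTensor (f : N →ₗ[R] P ⊗[R] A) (φ : M →ₗ[R] N) :
    rTensorLift (f ∘ₗ φ) = rTensorLift f ∘ₗ φ.rTensor A := by
  ext m a
  simp [rTensorLift_tmul]

end RTensorLift

section WreathProduct

variable {F A B : Type*} [Field F] [NonUnitalRing A] [Module F A] [NonUnitalRing B] [Module F B]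

section WrMul

variable [SMulCommClass F A A] [IsScalarTower F A A]

theorem wrMul_eq_rTensorLift_comp (f g : B →ₗ[F] B ⊗[F] A) :
    wrMul F A B f g = rTensorLift f ∘ₗ g :=
  rfl

theorem wrMul_assoc (f g h : B →ₗ[F] B ⊗[F] A) :
    wrMul F A B (wrMul F A B f g) h = wrMul F A B f (wrMul F A B g h) := by
  simp only [wrMul_eq_rTensorLift_comp, rTensorLift_comp, LinearMap.comp_assoc]

theorem wrMul_add_left (f g h : B →ₗ[F] B ⊗[F] A) :
    wrMul F A B (f + g) h = wrMul F A B f h + wrMul F A B g h := by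
  simp only [wrMul_eq_rTensorLift_comp, map_add, LinearMap.add_comp]

theorem wrMul_add_right (f g h : B →ₗ[F] B ⊗[F] A) :
    wrMul F A B f (g + h) = wrMul F A B f g + wrMul F A B f h :=
  LinearMap.comp_add g h (rTensorLift f)

end WrMul

variable [SMulCommClass F B B]

theorem actL_add_right (b : B) (f g : B →ₗ[F] B ⊗[F] A) :
    actL F A B b (f + g) = actL F A B b f + actL F A B b g :=
  LinearMap.comp_add _ _ _

theorem actR_add_left (f g : B →ₗ[F] B ⊗[F] A) (b : B) :
    actR F A B (f + g) b = actR F A B f b + actR F A B g b :=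
  LinearMap.add_comp _ _ _

theorem actR_actL (b b' : B) (f : B →ₗ[F] B ⊗[F] A) :
    actR F A B (actL F A B b f) b' = actL F A B b (actR F A B f b') :=
  rfl

theorem actR_actR (f : B →ₗ[F] B ⊗[F] A) (b b' : B) :
    actR F A B (actR F A B f b) b' = actR F A B f (b * b') := by
  simp only [actR, LinearMap.mulLeft_mul, LinearMap.comp_assoc]

theorem actL_mul (b b' : B) (f : B →ₗ[F] B ⊗[F] A) :
    actL F A B (b * b') f = actL F A B b (actL F A B b' f) := by
  simp only [actL, LinearMap.mulLeft_mul, LinearMap.rTensor_comp, LinearMap.comp_assoc]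

variable [SMulCommClass F A A] [IsScalarTower F A A]

theorem wrMul_actL (b : B) (f g : B →ₗ[F] B ⊗[F] A) :
    wrMul F A B (actL F A B b f) g = actL F A B b (wrMul F A B f g) := by
  simp only [wrMul_eq_rTensorLift_comp, actL, rTensorLift_rTensor_comp, LinearMap.comp_assoc]

theorem wrMul_actR (f : B →ₗ[F] B ⊗[F] A) (b : B) (g : B →ₗ[F] B ⊗[F] A) :
    wrMul F A B (actR F A B f b) g = wrMul F A B f (actL F A B b g) := by
  simp only [wrMul_eq_rTensorLift_comp, actR, actL, rTensorLift_comp_rTensor, LinearMap.comp_assoc]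

theorem actR_wrMul (f g : B →ₗ[F] B ⊗[F] A) (b : B) :
    actR F A B (wrMul F A B f g) b = wrMul F A B f (actR F A B g b) :=
  rfl

theorem wm_assoc (x y z : B × (B →ₗ[F] B ⊗[F] A)) :
    wm F A B (wm F A B x y) z = wm F A B x (wm F A B y z) := by
  refine Prod.ext (mul_assoc _ _ _) ?_
  simp only [wm, wrMul_add_left, wrMul_add_right, actL_add_right, actR_add_left, wrMul_assoc,
    wrMul_actL, wrMul_actR, actR_wrMul, actR_actL, actR_actR, actL_mul]
  abel

variable [IsScalarTower F B B] (F A B)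

noncomputable def wrMulₗ :
    (B →ₗ[F] B ⊗[F] A) →ₗ[F] (B →ₗ[F] B ⊗[F] A) →ₗ[F] B →ₗ[F] B ⊗[F] A :=
  LinearMap.llcomp F B (B ⊗[F] A) (B ⊗[F] A) ∘ₗ rTensorLift

noncomputable def actLₗ : B →ₗ[F] (B →ₗ[F] B ⊗[F] A) →ₗ[F] B →ₗ[F] B ⊗[F] A :=
  LinearMap.llcomp F B (B ⊗[F] A) (B ⊗[F] A) ∘ₗ LinearMap.rTensorHom A ∘ₗ LinearMap.mul F B

noncomputable def actRₗ : (B →ₗ[F] B ⊗[F] A) →ₗ[F] B →ₗ[F] B →ₗ[F] B ⊗[F] A :=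
  (LinearMap.llcomp F B B (B ⊗[F] A)).compl₂ (LinearMap.mul F B)

noncomputable def wmₗ :
    B × (B →ₗ[F] B ⊗[F] A) →ₗ[F] B × (B →ₗ[F] B ⊗[F] A) →ₗ[F] B × (B →ₗ[F] B ⊗[F] A) :=
  let L := B →ₗ[F] B ⊗[F] A
  ((LinearMap.mul F B).compl₁₂ (LinearMap.fst F B L) (LinearMap.fst F B L)).compr₂
      (LinearMap.inl F B L) +
    ((wrMulₗ F A B).compl₁₂ (LinearMap.snd F B L) (LinearMap.snd F B L) +
        (actLₗ F A B).compl₁₂ (LinearMap.fst F B L) (LinearMap.snd F B L) +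
        (actRₗ F A B).compl₁₂ (LinearMap.snd F B L) (LinearMap.fst F B L)).compr₂
      (LinearMap.inr F B L)

theorem wmₗ_apply (x y : B × (B →ₗ[F] B ⊗[F] A)) : wmₗ F A B x y = wm F A B x y := by
  simp only [wmₗ, wm, LinearMap.add_apply, LinearMap.compr₂_apply, LinearMap.compl₁₂_apply,
    LinearMap.fst_apply, LinearMap.snd_apply, LinearMap.coe_inl, LinearMap.coe_inr,
    Prod.mk_add_mk, add_zero, zero_add]
  rfl

end WreathProduct

/-- **Proposition (§2).** The matrix wreath product `A ≀ B = B ⊕ Lin(B, B ⊗_F A)`, equipped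
with the multiplication of `B`, the multiplication `fg = (1⊗μ)∘(f⊗1)∘g` on `Lin(B, B ⊗_F A)`,
and the `B`-actions `(fb)(b') = f(bb')`, `(bf)(b') = (b⊗1)f(b')`, is an associative
`F`-algebra: the multiplication `wm` is `F`-bilinear and associative. -/
theorem matrix_wreath_product_is_associative_algebra
    (F : Type*) [Field F]
    (A : Type*) [NonUnitalRing A] [Module F A] [SMulCommClass F A A] [IsScalarTower F A A]
    (B : Type*) [NonUnitalRing B] [Module F B] [SMulCommClass F B B] [IsScalarTower F B B] :
    (∀ x y z : B × (B →ₗ[F] B ⊗[F] A),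
        wm F A B (wm F A B x y) z = wm F A B x (wm F A B y z)) ∧
    (∀ x y z : B × (B →ₗ[F] B ⊗[F] A),
        wm F A B (x + y) z = wm F A B x z + wm F A B y z) ∧
    (∀ x y z : B × (B →ₗ[F] B ⊗[F] A),
        wm F A B x (y + z) = wm F A B x y + wm F A B x z) ∧
    (∀ (c : F) (x y : B × (B →ₗ[F] B ⊗[F] A)),
        wm F A B (c • x) y = c • wm F A B x y ∧ wm F A B x (c • y) = c • wm F A B x y) := by
  refine ⟨wm_assoc, fun x y z => ?_, fun x y z => ?_, fun c x y => ⟨?_, ?_⟩⟩ <;>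
    simp only [← wmₗ_apply, map_add, map_smul, LinearMap.add_apply, LinearMap.smul_apply]
end

section
/- Suppose B contains no nonzero element b with dim_F bB < ∞. Then: (1) L_B·S(A,B) + S(A,B)·L_B ⊆ S(A,B), where the products are taken in Lin(B, B⊗_F Â); (2) L_B ∩ S(A,B) = (0). -/
open TensorProduct

/-! Composing with `L_b = (b ·) ⊗ 1` on either side only touches the `B`-factor: on the left it
applies `b ·` to the `B`-components of the values, on the right it precomposes with `b ·`; both
keep the values inside `V ⊗ A` for a finite-dimensional `V`. An element of `S(A,B)` takes values
in `B ⊗ A`, whose image in `B ⊗ Â` has zero scalar part, whereas the scalar part of `L_b` is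
`x ↦ bx`; so `L_b ∈ S(A,B)` forces `bB = 0`, which is finite-dimensional. -/

open LinearMap

section TensorOne

variable {F : Type*} [Field F] {R : Type*} [Ring R] [Algebra F R]

lemma lTensor_mul'_assoc_tmul_one {M : Type*} [AddCommGroup M] [Module F M] (t : M ⊗[F] R) :
    lTensor M (mul' F R) (TensorProduct.assoc F M R R (t ⊗ₜ 1)) = t := by
  induction t with
  | zero => simp
  | tmul m r => simp [mul'_apply]
  | add x y hx hy => rw [add_tmul, map_add, map_add, hx, hy]

variable {B : Type*} [NonUnitalRing B] [Module F B]

lemma wrMul_tensorOne_right (f : B →ₗ[F] B ⊗[F] R) (φ : B →ₗ[F] B) :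
    wrMul F R B f ((TensorProduct.mk F B R).flip 1 ∘ₗ φ) = f ∘ₗ φ := by
  ext x
  simp [wrMul, lTensor_mul'_assoc_tmul_one]

lemma wrMul_tensorOne_left (φ : B →ₗ[F] B) (f : B →ₗ[F] B ⊗[F] R) :
    wrMul F R B ((TensorProduct.mk F B R).flip 1 ∘ₗ φ) f = rTensor R φ ∘ₗ f := by
  suffices h : lTensor B (mul' F R) ∘ₗ (TensorProduct.assoc F B R R).toLinearMap ∘ₗ
      rTensor R ((TensorProduct.mk F B R).flip 1 ∘ₗ φ) = rTensor R φ by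
    simp only [wrMul, ← h, comp_assoc]
  ext x r
  simp [mul'_apply]

end TensorOne

section FiniteRange

variable {F : Type*} [Field F] {A : Type*} [NonUnitalRing A] [Module F A]
variable {B : Type*} [NonUnitalRing B] [Module F B]

lemma comp_mem_SAB {f : B →ₗ[F] B ⊗[F] A} (hf : f ∈ SAB F A B) (φ : B →ₗ[F] B) :
    f ∘ₗ φ ∈ SAB F A B := by
  obtain ⟨V, hV, hf⟩ := hf
  exact ⟨V, hV, (range_comp_le_range φ f).trans hf⟩

lemma rTensor_comp_mem_SAB (φ : B →ₗ[F] B) {f : B →ₗ[F] B ⊗[F] A} (hf : f ∈ SAB F A B) :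
    rTensor A φ ∘ₗ f ∈ SAB F A B := by
  obtain ⟨V, hV, hf⟩ := hf
  -- `φ` maps `V ⊗ A` into `φ(V) ⊗ A`.
  have hφV : φ ∘ₗ V.subtype = (V.map φ).subtype ∘ₗ φ.submoduleMap V := rfl
  refine ⟨V.map φ, inferInstance, ?_⟩
  calc range (rTensor A φ ∘ₗ f)
      = (range f).map (rTensor A φ) := range_comp f _
    _ ≤ (range (rTensor A V.subtype)).map (rTensor A φ) := Submodule.map_mono hf
    _ = range (rTensor A ((V.map φ).subtype ∘ₗ φ.submoduleMap V)) := by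
      rw [← hφV, rTensor_comp, range_comp]
    _ ≤ range (rTensor A (V.map φ).subtype) := by
      rw [rTensor_comp]
      exact range_comp_le_range _ _

end FiniteRange

section Unitization

variable {F : Type*} [Field F]
variable {A : Type*} [NonUnitalRing A] [Module F A] [SMulCommClass F A A] [IsScalarTower F A A]
variable {M N : Type*} [AddCommGroup M] [Module F M] [AddCommGroup N] [Module F N]

lemma eq_zero_of_lTensor_inr_comp_eq_tensorOne_comp {g : M →ₗ[F] N ⊗[F] A} {φ : M →ₗ[F] N}
    (h : lTensor N (Unitization.inrHom F F A) ∘ₗ g =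
      (TensorProduct.mk F N (Unitization F A)).flip 1 ∘ₗ φ) :
    φ = 0 := by
  -- The scalar part `Unitization.fst` kills `A` but not `1`.
  have hfst : (Unitization.fstHom F A).toLinearMap ∘ₗ Unitization.inrHom F F A = 0 := by
    ext a
    simp
  have key := congrArg
    ((TensorProduct.rid F N).toLinearMap ∘ₗ lTensor N (Unitization.fstHom F A).toLinearMap ∘ₗ ·) h
  ext x
  simpa [← comp_assoc, ← lTensor_comp, hfst] using (LinearMap.congr_fun key x).symm

end Unitization

/-- **Lemma 1.** Suppose `B` contains no nonzero element `b` with `dim_F bB < ∞`. Regard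
`S(A,B)` inside `Lin(B, B ⊗_F Â)` (where `Â = Unitization F A` is the unital hull), and let
`L_b : x ↦ (bx) ⊗ 1`. Then (1) `L_B·S(A,B) + S(A,B)·L_B ⊆ S(A,B)`, and
(2) `L_B ∩ S(A,B) = (0)`. -/
theorem lemma1_LB_SAB
    (F : Type*) [Field F]
    (A : Type*) [NonUnitalRing A] [Module F A] [SMulCommClass F A A] [IsScalarTower F A A]
    (B : Type*) [NonUnitalRing B] [Module F B] [SMulCommClass F B B] [IsScalarTower F B B]
    (hB : ∀ b : B, FiniteDimensional F (LinearMap.range (LinearMap.mulLeft F b)) → b = 0) :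
    let Ahat := Unitization F A
    let SABhat : Set (B →ₗ[F] B ⊗[F] Ahat) :=
      (fun f => (LinearMap.lTensor B (Unitization.inrHom F F A)) ∘ₗ f) '' (SAB F A B)
    let Lb : B → (B →ₗ[F] B ⊗[F] Ahat) :=
      fun b => ((TensorProduct.mk F B Ahat).flip 1) ∘ₗ LinearMap.mulLeft F b
    (∀ b : B, ∀ f ∈ SABhat,
        wrMul F Ahat B (Lb b) f ∈ SABhat ∧ wrMul F Ahat B f (Lb b) ∈ SABhat) ∧
    (∀ b : B, Lb b ∈ SABhat → b = 0) := by
  intro Ahat SABhat Lb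
  refine ⟨fun b f hf => ?_, fun b hb => ?_⟩
  · obtain ⟨g, hg, rfl⟩ := hf
    refine ⟨⟨rTensor A (mulLeft F b) ∘ₗ g, rTensor_comp_mem_SAB _ hg, ?_⟩,
      ⟨g ∘ₗ mulLeft F b, comp_mem_SAB hg _, ?_⟩⟩
    · rw [wrMul_tensorOne_left, ← comp_assoc, rTensor_comp_lTensor, ← lTensor_comp_rTensor]
      rfl
    · rw [wrMul_tensorOne_right, comp_assoc]
  · obtain ⟨g, -, hg⟩ := hb
    apply hB
    rw [eq_zero_of_lTensor_inr_comp_eq_tensorOne_comp hg, range_zero]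
    infer_instance
end

section
/- Let R be a prime algebra with a nonzero left ideal L such that: (1) {ℓ ∈ L : Lℓ = 0} = (0); and (2) for every n ≥ 1, every a ∈ R, and all ℓ₁,…,ℓ_n ∈ L there exists ℓ' ∈ L with (a − ℓ')ℓ_i = 0 for 1 ≤ i ≤ n. Then R is a primitive algebra if and only if L (with its induced multiplication) is a primitive algebra. -/
open TensorProduct

/-!
If `M` is a faithful irreducible `R`-module, let `N = {m | L m = 0}`. Then `L` acts on `M / N`:
faithfully by (1), and irreducibly because `R L ⊆ L`, so any `m ∉ N` has `l m ≠ 0` for some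
`l ∈ L` and then `M = R l m ⊆ L m`.

Conversely, if `M` is a faithful irreducible `L`-module, then `M = L m₀` for any `m₀` with
`L m₀ ≠ 0`, and `a • (l m₀) := (a l) m₀` defines an `R`-module structure: it is well defined
since by (2) `a l = l' l` for some `l' ∈ L`, so `l m₀ = 0` forces `(a l) m₀ = l' (l m₀) = 0`.
The kernel `I` of this action satisfies `I L = 0`, so `I` annihilates the nonzero ideal
`{x | I x = 0} ⊇ L`, and primeness of `R` forces `I = 0`.
-/

section

variable {R : Type v} [NonUnitalRing R]

theorem isPrimitiveIn_top_iff :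
    IsPrimitiveIn (fun a b : R => a * b) ⊤ ↔ IsPrimitiveRing R := by
  constructor
  · rintro ⟨M, _, ρ, hadd, hmul, hinj, ⟨r, -, m, hrm⟩, htrans⟩
    have hadd' (x y : R) : ρ (x + y) = ρ x + ρ y := hadd x trivial y trivial
    let σ : R →ₙ+* AddMonoid.End M :=
      { toFun := ρ
        map_zero' := by simpa using hadd' 0 0
        map_add' := hadd'
        map_mul' := fun x y => hmul x trivial y trivial }
    refine ⟨M, _, σ, fun x y h => hinj trivial trivial h, ⟨r, m, hrm⟩, fun m hm y => ?_⟩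
    obtain ⟨x, -, hx⟩ := htrans m hm y
    exact ⟨x, hx⟩
  · rintro ⟨M, _, ρ, hinj, ⟨r, m, hrm⟩, htrans⟩
    refine ⟨M, _, ρ, fun x _ y _ => map_add ρ x y, fun x _ y _ => map_mul ρ x y,
      fun x _ y _ h => hinj h, ⟨r, trivial, m, hrm⟩, fun m hm y => ?_⟩
    obtain ⟨x, hx⟩ := htrans m hm y
    exact ⟨x, trivial, hx⟩

theorem IsPrimeIn.eq_bot_of_mul_eq_zero
    (hprime : IsPrimeIn (fun a b : R => a * b) ⊤) {I L : AddSubgroup R}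
    (hI : IsIdealIn (fun a b : R => a * b) ⊤ I) (hL : L ≠ ⊥)
    (hIL : ∀ a ∈ I, ∀ l ∈ L, a * l = 0) : I = ⊥ := by
  -- the right annihilator of `I`: an ideal containing `L`
  let J : AddSubgroup R :=
    { carrier := {x | ∀ a ∈ I, a * x = 0}
      zero_mem' := fun a _ => mul_zero a
      add_mem' := fun hx hy a ha => by rw [mul_add, hx a ha, hy a ha, add_zero]
      neg_mem' := fun hx a ha => by rw [mul_neg, hx a ha, neg_zero] }
  have hJ : IsIdealIn (fun a b : R => a * b) ⊤ J := by
    refine ⟨le_top, fun x _ y hy => ⟨fun a ha => ?_, fun a ha => ?_⟩⟩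
    · rw [← mul_assoc, hy _ ((hI.2 x trivial a ha).2)]
    · rw [← mul_assoc, hy a ha, zero_mul]
  refine (hprime I J hI hJ fun a ha b hb => hb a ha).resolve_right fun hJbot => hL ?_
  exact eq_bot_iff.mpr fun l hl => hJbot ▸ fun a ha => hIL a ha l hl

section RestrictToLeftIdeal

variable {M : Type v} [AddCommGroup M]

theorem NonUnitalRingHom.map_mul_apply (ρ : R →ₙ+* AddMonoid.End M) (x y : R) (m : M) :
    ρ (x * y) m = ρ x (ρ y m) := by
  simp

def annihilatedBy (ρ : R →ₙ+* AddMonoid.End M) (L : AddSubgroup R) : AddSubgroup M where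
  carrier := {m | ∀ l ∈ L, ρ l m = 0}
  zero_mem' := fun l _ => map_zero (ρ l)
  add_mem' := fun hm hn l hl => by rw [map_add, hm l hl, hn l hl, add_zero]
  neg_mem' := fun hm l hl => by rw [map_neg, hm l hl, neg_zero]

variable {ρ : R →ₙ+* AddMonoid.End M} {L : AddSubgroup R}

theorem apply_mem_annihilatedBy (hleft : ∀ r : R, ∀ l ∈ L, r * l ∈ L) {l : R} (hl : l ∈ L)
    {m : M} (hm : m ∈ annihilatedBy ρ L) : ρ l m ∈ annihilatedBy ρ L := fun l' hl' => by
  have := hm _ (hleft l' l hl)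
  rwa [ρ.map_mul_apply] at this

variable (ρ L) in
open Classical in
/-- The value `0`, for `x` not preserving `annihilatedBy ρ L`, is junk. -/
noncomputable def quotientAction (x : R) : AddMonoid.End (M ⧸ annihilatedBy ρ L) :=
  if h : ∀ m ∈ annihilatedBy ρ L, ρ x m ∈ annihilatedBy ρ L then QuotientAddGroup.map _ _ (ρ x) h
  else 0

theorem quotientAction_mk (hleft : ∀ r : R, ∀ l ∈ L, r * l ∈ L) {x : R} (hx : x ∈ L) (m : M) :
    quotientAction ρ L x m = (ρ x m : M ⧸ annihilatedBy ρ L) := by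
  have h : ∀ m ∈ annihilatedBy ρ L, ρ x m ∈ annihilatedBy ρ L :=
    fun _ => apply_mem_annihilatedBy hleft hx
  have hdef : quotientAction ρ L x = QuotientAddGroup.map _ _ (ρ x) h := dif_pos h
  exact congrArg (fun f : AddMonoid.End (M ⧸ annihilatedBy ρ L) => f m) hdef

theorem eq_zero_of_forall_apply_mem_annihilatedByBy (hρ : Function.Injective ρ)
    (hLann : ∀ l ∈ L, (∀ l' ∈ L, l' * l = 0) → l = 0)
    {l : R} (hl : l ∈ L) (h : ∀ m, ρ l m ∈ annihilatedBy ρ L) : l = 0 :=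
  hLann l hl fun l' hl' => (injective_iff_map_eq_zero ρ).mp hρ _ <| AddMonoidHom.ext fun m =>
    (ρ.map_mul_apply l' l m).trans (h m l' hl')

end RestrictToLeftIdeal

theorem IsPrimitiveRing.isPrimitiveIn_of_isLeftIdeal (hR : IsPrimitiveRing R)
    {L : AddSubgroup R} (hL0 : L ≠ ⊥) (hleft : ∀ r : R, ∀ l ∈ L, r * l ∈ L)
    (hLann : ∀ l ∈ L, (∀ l' ∈ L, l' * l = 0) → l = 0) :
    IsPrimitiveIn (fun a b : R => a * b) L := by
  obtain ⟨M, _, ρ, hρ, -, htrans⟩ := hR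
  have hmk {x : R} (hx : x ∈ L) (m : M) := quotientAction_mk (ρ := ρ) hleft hx m
  refine ⟨M ⧸ annihilatedBy ρ L, _, quotientAction ρ L, fun x hx y hy => ?_, fun x hx y hy => ?_,
    fun x hx y hy hxy => ?_, ?_, fun m hm y => ?_⟩
  · refine DFunLike.ext _ _ fun m => QuotientAddGroup.induction_on m fun m => ?_
    show _ = quotientAction ρ L x m + quotientAction ρ L y m
    rw [hmk (L.add_mem hx hy), hmk hx, hmk hy, map_add]
    rfl
  · refine DFunLike.ext _ _ fun m => QuotientAddGroup.induction_on m fun m => ?_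
    show _ = quotientAction ρ L x (quotientAction ρ L y m)
    rw [hmk (hleft x y hy), hmk hy, hmk hx, ρ.map_mul_apply]
  · refine sub_eq_zero.mp <| eq_zero_of_forall_apply_mem_annihilatedByBy hρ hLann
      (L.sub_mem hx hy) fun m => ?_
    have := DFunLike.congr_fun hxy (m : M ⧸ annihilatedBy ρ L)
    rw [hmk hx, hmk hy, QuotientAddGroup.eq_iff_sub_mem] at this
    rw [map_sub]
    exact this
  · obtain ⟨⟨l, hl⟩, hl0⟩ := AddSubgroup.ne_bot_iff_exists_ne_zero.mp hL0
    obtain ⟨m, hm⟩ : ∃ m, ρ l m ∉ annihilatedBy ρ L := by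
      by_contra! h
      exact hl0 (Subtype.ext (eq_zero_of_forall_apply_mem_annihilatedByBy hρ hLann hl h))
    exact ⟨l, hl, m, by rwa [hmk hl, Ne, QuotientAddGroup.eq_zero_iff]⟩
  · induction m using QuotientAddGroup.induction_on with | H m =>
    induction y using QuotientAddGroup.induction_on with | H y =>
    obtain ⟨l, hl, hlm⟩ : ∃ l ∈ L, ρ l m ≠ 0 := by
      by_contra! h
      exact hm ((QuotientAddGroup.eq_zero_iff m).mpr h)
    obtain ⟨r, hr⟩ := htrans _ hlm y
    exact ⟨r * l, hleft r l hl, by rw [hmk (hleft r l hl), ρ.map_mul_apply, hr]⟩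

theorem NonUnitalRingHom.isIdealIn_ker {S : Type*} [NonUnitalRing S] (σ : R →ₙ+* S) :
    IsIdealIn (fun a b : R => a * b) ⊤ (σ : R →+ S).ker :=
  ⟨le_top, fun x _ y hy => by simp_all [AddMonoidHom.mem_ker]⟩

section ExtendFromLeftIdeal

variable {L : AddSubgroup R} {M : Type v} [AddCommGroup M] {ρ : R → AddMonoid.End M}

theorem apply_add_of_mem (hadd : ∀ x ∈ L, ∀ y ∈ L, ρ (x + y) = ρ x + ρ y) {x y : R}
    (hx : x ∈ L) (hy : y ∈ L) (m : M) : ρ (x + y) m = ρ x m + ρ y m :=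
  DFunLike.congr_fun (hadd x hx y hy) m

theorem apply_sub_of_mem (hadd : ∀ x ∈ L, ∀ y ∈ L, ρ (x + y) = ρ x + ρ y) {x y : R}
    (hx : x ∈ L) (hy : y ∈ L) (m : M) : ρ (x - y) m = ρ x m - ρ y m := by
  rw [eq_sub_iff_add_eq, ← apply_add_of_mem hadd (L.sub_mem hx hy) hy, sub_add_cancel]

theorem apply_mul_eq_of_apply_eq (hadd : ∀ x ∈ L, ∀ y ∈ L, ρ (x + y) = ρ x + ρ y)
    (hmul : ∀ x ∈ L, ∀ y ∈ L, ρ (x * y) = ρ x * ρ y) (hleft : ∀ r : R, ∀ l ∈ L, r * l ∈ L)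
    (hfactor : ∀ a : R, ∀ l ∈ L, ∃ l' ∈ L, a * l = l' * l) (a : R) {m₀ : M} {l₁ l₂ : R}
    (h₁ : l₁ ∈ L) (h₂ : l₂ ∈ L) (h : ρ l₁ m₀ = ρ l₂ m₀) : ρ (a * l₁) m₀ = ρ (a * l₂) m₀ := by
  obtain ⟨l', hl', hfac⟩ := hfactor a (l₁ - l₂) (L.sub_mem h₁ h₂)
  rw [← sub_eq_zero, ← apply_sub_of_mem hadd (hleft a l₁ h₁) (hleft a l₂ h₂), ← mul_sub, hfac,
    hmul l' hl' _ (L.sub_mem h₁ h₂)]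
  show ρ l' (ρ (l₁ - l₂) m₀) = 0
  rw [apply_sub_of_mem hadd h₁ h₂, h, sub_self, map_zero]

theorem exists_extension_of_isLeftIdeal (hadd : ∀ x ∈ L, ∀ y ∈ L, ρ (x + y) = ρ x + ρ y)
    (hmul : ∀ x ∈ L, ∀ y ∈ L, ρ (x * y) = ρ x * ρ y) (hleft : ∀ r : R, ∀ l ∈ L, r * l ∈ L)
    (hfactor : ∀ a : R, ∀ l ∈ L, ∃ l' ∈ L, a * l = l' * l) {m₀ : M}
    (hgen : ∀ m : M, ∃ l ∈ L, ρ l m₀ = m) :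
    ∃ σ : R →ₙ+* AddMonoid.End M, ∀ l ∈ L, σ l = ρ l := by
  let act (a : R) (m : M) : M := ρ (a * (hgen m).choose) m₀
  have act_apply (a : R) {l : R} (hl : l ∈ L) : act a (ρ l m₀) = ρ (a * l) m₀ :=
    apply_mul_eq_of_apply_eq hadd hmul hleft hfactor a (hgen _).choose_spec.1 hl
      (hgen _).choose_spec.2
  have act_add (a : R) (m n : M) : act a (m + n) = act a m + act a n := by
    obtain ⟨l₁, h₁, rfl⟩ := hgen m
    obtain ⟨l₂, h₂, rfl⟩ := hgen n
    rw [← apply_add_of_mem hadd h₁ h₂, act_apply a (L.add_mem h₁ h₂), act_apply a h₁,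
      act_apply a h₂, mul_add, apply_add_of_mem hadd (hleft a l₁ h₁) (hleft a l₂ h₂)]
  let σ (a : R) : AddMonoid.End M := AddMonoidHom.mk' (act a) (act_add a)
  have σ_ext {f g : AddMonoid.End M} (h : ∀ l ∈ L, f (ρ l m₀) = g (ρ l m₀)) : f = g :=
    DFunLike.ext _ _ fun m => by
      obtain ⟨l, hl, rfl⟩ := hgen m
      exact h l hl
  refine ⟨{ toFun := σ, map_zero' := ?zero, map_add' := ?add, map_mul' := ?mul }, ?ext⟩
  case zero =>
    refine σ_ext fun l hl => ?_
    show act 0 (ρ l m₀) = 0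
    rw [act_apply 0 hl, zero_mul, ← sub_self 0, apply_sub_of_mem hadd L.zero_mem L.zero_mem,
      sub_self]
  case add =>
    refine fun a b => σ_ext fun l hl => ?_
    show act (a + b) (ρ l m₀) = act a (ρ l m₀) + act b (ρ l m₀)
    rw [act_apply _ hl, act_apply _ hl, act_apply _ hl, add_mul,
      apply_add_of_mem hadd (hleft a l hl) (hleft b l hl)]
  case mul =>
    refine fun a b => σ_ext fun l hl => ?_
    show act (a * b) (ρ l m₀) = act a (act b (ρ l m₀))
    rw [act_apply _ hl, act_apply _ hl, act_apply _ (hleft b l hl), mul_assoc]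
  case ext =>
    refine fun l' hl' => σ_ext fun l hl => ?_
    show act l' (ρ l m₀) = ρ l' (ρ l m₀)
    rw [act_apply _ hl, hmul l' hl' l hl]
    rfl

end ExtendFromLeftIdeal

theorem IsPrimitiveIn.isPrimitiveRing_of_isLeftIdeal
    (hprime : IsPrimeIn (fun a b : R => a * b) ⊤) {L : AddSubgroup R} (hL0 : L ≠ ⊥)
    (hleft : ∀ r : R, ∀ l ∈ L, r * l ∈ L) (hfactor : ∀ a : R, ∀ l ∈ L, ∃ l' ∈ L, a * l = l' * l)
    (hL : IsPrimitiveIn (fun a b : R => a * b) L) : IsPrimitiveRing R := by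
  obtain ⟨M, _, ρ, hadd, hmul, hinj, ⟨x₀, hx₀, m₀, hm₀⟩, htrans⟩ := hL
  have hgen (m : M) : ∃ l ∈ L, ρ l m₀ = m := htrans m₀ (fun h => hm₀ (by rw [h, map_zero])) m
  obtain ⟨σ, hσ⟩ := exists_extension_of_isLeftIdeal hadd hmul hleft hfactor hgen
  have hker_mul : ∀ a ∈ (σ : R →+ AddMonoid.End M).ker, ∀ l ∈ L, a * l = 0 := fun a ha l hl =>
    hinj (hleft a l hl) L.zero_mem <| by
      rw [← hσ _ (hleft a l hl), ← hσ 0 L.zero_mem, map_mul,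
        show σ a = 0 from AddMonoidHom.mem_ker.mp ha, zero_mul, map_zero]
  have hker := hprime.eq_bot_of_mul_eq_zero σ.isIdealIn_ker hL0 hker_mul
  refine ⟨M, _, σ, (injective_iff_map_eq_zero σ).mpr fun a ha => ?_, ⟨x₀, m₀, ?_⟩,
    fun m hm y => ?_⟩
  · exact AddSubgroup.mem_bot.mp (hker ▸ AddMonoidHom.mem_ker.mpr ha)
  · rwa [hσ x₀ hx₀]
  · obtain ⟨l, hl, hly⟩ := htrans m hm y
    exact ⟨l, by rwa [hσ l hl]⟩

end

theorem lemma2_primitive_iff_left_ideal_general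
    (R : Type v) [NonUnitalRing R]
    (hprime : IsPrimeIn (fun a b : R => a * b) (⊤ : AddSubgroup R))
    (L : AddSubgroup R) (hL0 : L ≠ ⊥)
    (hleft : ∀ r : R, ∀ l ∈ L, r * l ∈ L)
    (h1 : ∀ l ∈ L, (∀ l' ∈ L, l' * l = 0) → l = 0)
    (h2 : ∀ (n : ℕ) (a : R) (ℓ : Fin n → R), (∀ i, ℓ i ∈ L) →
      ∃ l' ∈ L, ∀ i, (a - l') * ℓ i = 0) :
    IsPrimitiveIn (fun a b : R => a * b) (⊤ : AddSubgroup R) ↔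
      IsPrimitiveIn (fun a b : R => a * b) L := by
  rw [isPrimitiveIn_top_iff]
  refine ⟨fun hR => hR.isPrimitiveIn_of_isLeftIdeal hL0 hleft h1,
    IsPrimitiveIn.isPrimitiveRing_of_isLeftIdeal hprime hL0 hleft fun a l hl => ?_⟩
  obtain ⟨l', hl', h⟩ := h2 1 a (fun _ => l) fun _ => hl
  exact ⟨l', hl', sub_eq_zero.mp (by simpa [sub_mul] using h 0)⟩

/-- **Lemma 2.** Let `R` be a prime algebra with a nonzero left ideal `L` such that:
(1) `{ℓ ∈ L : Lℓ = 0} = (0)`; and (2) for every `n ≥ 1`, every `a ∈ R`, and all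
`ℓ₁, …, ℓ_n ∈ L` there exists `ℓ' ∈ L` with `(a − ℓ')ℓᵢ = 0` for `1 ≤ i ≤ n`. Then `R` is
primitive if and only if `L` (with its induced multiplication) is primitive. -/
theorem lemma2_primitive_iff_left_ideal
    (F : Type u) [Field F] (R : Type v) [NonUnitalRing R] [Module F R]
    [SMulCommClass F R R] [IsScalarTower F R R]
    (hprime : IsPrimeIn (fun a b : R => a * b) (⊤ : AddSubgroup R))
    (L : AddSubgroup R) (hL0 : L ≠ ⊥)
    (hleft : ∀ r : R, ∀ l ∈ L, r * l ∈ L)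
    (h1 : ∀ l ∈ L, (∀ l' ∈ L, l' * l = 0) → l = 0)
    (h2 : ∀ (n : ℕ) (a : R) (ℓ : Fin n → R), (∀ i, ℓ i ∈ L) →
      ∃ l' ∈ L, ∀ i, (a - l') * ℓ i = 0) :
    IsPrimitiveIn (fun a b : R => a * b) (⊤ : AddSubgroup R) ↔
      IsPrimitiveIn (fun a b : R => a * b) L :=
  lemma2_primitive_iff_left_ideal_general R hprime L hL0 hleft h1 h2
end

section
/- Let F be an infinite field and let B be an associative F-algebra such that {b ∈ B : bB = 0} = (0) and ⋂_{s≥1} B^s = (0). Then for arbitrary linearly independent elements b₁,…,b_n ∈ B and arbitrary s ≥ 1 there exists an element b ∈ B^s such that b₁b,…,b_nb are linearly independent over F. -/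
open TensorProduct

/-!
Among all `c ∈ B^s` choose `c₀` for which `g ↦ (∑ gᵢ bᵢ) c₀` has the smallest kernel. Since `F`
is infinite, comparing with the maps for `c₀ + ξ c` shows that every `d = ∑ δᵢ bᵢ` with `d c₀ = 0`
satisfies `d B^s ⊆ F b₁c₀ + ⋯ + F bₙc₀`, a finite-dimensional space. The descending chain `d B^k`
therefore stabilizes at some `Y` with `Y = Y B`, which forces `Y ⊆ ⋂ B^k = 0`; as `B` has no left
annihilators, `Y B = 0` implies `Y = 0`, and descending the chain gives `d B = 0`, hence `d = 0`.
-/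

open Module LinearMap Submodule

section Perturbation

variable {F V M : Type*} [Field F] [Infinite F] [AddCommGroup M] [Module F M]

/-- The exceptional `ξ` are those with `-ξ⁻¹` an eigenvalue of `P ∘ H`, `P` a left inverse
of `G`; there are finitely many. -/
theorem LinearMap.exists_ne_zero_injective_add_smul {U : Type*} [AddCommGroup U] [Module F U]
    [FiniteDimensional F U] {G : U →ₗ[F] M} (hG : Function.Injective G) (H : U →ₗ[F] M) :
    ∃ ξ : F, ξ ≠ 0 ∧ Function.Injective (G + ξ • H) := by
  obtain ⟨P, hPG⟩ := G.exists_leftInverse_of_injective (ker_eq_bot.mpr hG)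
  obtain ⟨μ, hμ⟩ := ((Module.End.finite_hasEigenvalue (P ∘ₗ H)).union
    (Set.finite_singleton 0)).infinite_compl.nonempty
  simp only [Set.mem_compl_iff, Set.mem_union, Set.mem_singleton_iff, not_or] at hμ
  obtain ⟨hμ_eig, hμ0⟩ := hμ
  have h_eigenspace : Module.End.eigenspace (P ∘ₗ H) μ = ⊥ :=
    not_ne_iff.mp (Module.End.hasEigenvalue_iff.not.mp hμ_eig)
  refine ⟨-μ⁻¹, by simpa using hμ0, ?_⟩
  rw [← ker_eq_bot, eq_bot_iff, ← h_eigenspace]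
  intro u hu
  have hPu : u - μ⁻¹ • P (H u) = 0 := by
    simpa [← comp_apply P G, hPG, sub_eq_add_neg] using congrArg P hu
  rw [Module.End.mem_eigenspace_iff, comp_apply, ← inv_smul_eq_iff₀ hμ0, eq_comm]
  exact sub_eq_zero.mp hPu

variable [AddCommGroup V] [Module F V] [FiniteDimensional F V]

/-- With `E` a complement of `ker f`, the map `(e, t) ↦ f e + t • g v` is injective on `E × F`,
and its perturbation by `ξ • g` factors through `f + ξ • g`. -/
theorem LinearMap.exists_finrank_ker_add_smul_lt {f g : V →ₗ[F] M} {v : V} (hv : v ∈ ker f)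
    (hgv : g v ∉ range f) : ∃ ξ : F, finrank F (ker (f + ξ • g)) < finrank F (ker f) := by
  obtain ⟨E, hE⟩ := Submodule.exists_isCompl (ker f)
  let G : E × F →ₗ[F] M := (f ∘ₗ E.subtype).coprod (toSpanSingleton F M (g v))
  have hG : Function.Injective G := by
    rw [← ker_eq_bot, eq_bot_iff]
    rintro ⟨e, t⟩ he
    have he : f e + t • g v = 0 := by simpa [G] using he
    have ht : t = 0 := by
      by_contra ht
      refine hgv ⟨-t⁻¹ • (e : V), ?_⟩
      rw [map_smul, eq_neg_of_add_eq_zero_left he, smul_neg, neg_smul, neg_neg, smul_smul,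
        inv_mul_cancel₀ ht, one_smul]
    subst ht
    have he' : (e : V) = 0 :=
      Submodule.disjoint_def.mp hE.disjoint _ (by simpa using he) e.2
    simp [Prod.ext_iff, Subtype.ext_iff, he']
  obtain ⟨ξ, hξ, hinj⟩ := exists_ne_zero_injective_add_smul hG (g ∘ₗ E.subtype ∘ₗ fst F E F)
  let Φ : E × F →ₗ[F] V := E.subtype.coprod (toSpanSingleton F V (ξ⁻¹ • v))
  have hfactor : G + ξ • (g ∘ₗ E.subtype ∘ₗ fst F E F) = (f + ξ • g) ∘ₗ Φ := by
    ext <;> simp [G, Φ, mem_ker.mp hv, smul_smul, hξ]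
  have h_range := finrank_range_of_inj hinj
  rw [hfactor, Module.finrank_prod, Module.finrank_self] at h_range
  have h_le := Submodule.finrank_mono (range_comp_le_range Φ (f + ξ • g))
  have h_rank := finrank_range_add_finrank_ker (f + ξ • g)
  have h_compl := Submodule.finrank_add_eq_of_isCompl hE
  exact ⟨ξ, by omega⟩

theorem LinearMap.map_ker_le_range_of_forall_finrank_ker_le {f g : V →ₗ[F] M}
    (h : ∀ ξ : F, finrank F (ker f) ≤ finrank F (ker (f + ξ • g))) :
    (ker f).map g ≤ range f := by
  rintro _ ⟨v, hv, rfl⟩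
  by_contra hgv
  obtain ⟨ξ, hξ⟩ := exists_finrank_ker_add_smul_lt hv hgv
  exact (h ξ).not_gt hξ

end Perturbation

namespace IsWord

variable {P : Type*} {mul : P → P → P} {S : Set P}

theorem one_le {k : ℕ} {x : P} (h : IsWord mul S k x) : 1 ≤ k := by
  induction h <;> omega

theorem mem_of_eq_one {k : ℕ} {x : P} (h : IsWord mul S k x) (hk : k = 1) : x ∈ S := by
  cases h with
  | base hx => exact hx
  | mul h₁ h₂ => have := h₁.one_le; have := h₂.one_le; omega

theorem exists_eq_mul_of_two_le (hmul : ∀ x y z, mul (mul x y) z = mul x (mul y z)) {k : ℕ}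
    {x : P} (h : IsWord mul S k x) (hk : 2 ≤ k) :
    ∃ y z, IsWord mul S (k - 1) y ∧ z ∈ S ∧ x = mul y z := by
  induction h with
  | base => omega
  | @mul m n u v hu hv _ ihv =>
    obtain rfl | hn := (hv.one_le).eq_or_lt
    · exact ⟨u, v, by simpa using hu, hv.mem_of_eq_one rfl, rfl⟩
    · obtain ⟨y, z, hy, hz, rfl⟩ := ihv hn
      refine ⟨mul u y, z, ?_, hz, (hmul u y z).symm⟩
      convert hu.mul hy using 1
      omega

end IsWord

section SpanPow

variable (R A : Type*) [CommSemiring R] [NonUnitalSemiring A] [Module R A]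

/-- The paper's `A^s`. -/
def spanPow (s : ℕ) : Submodule R A :=
  span R {x : A | IsWord (· * ·) (Set.univ : Set A) s x}

variable {R A}

theorem spanPow_one : spanPow R A 1 = ⊤ :=
  eq_top_iff.mpr fun x _ => subset_span (IsWord.base (Set.mem_univ x))

variable [SMulCommClass R A A] [IsScalarTower R A A]

theorem spanPow_succ_succ (m : ℕ) :
    spanPow R A (m + 2) = map₂ (mul R A) (spanPow R A (m + 1)) ⊤ := by
  rw [spanPow, spanPow, ← span_univ, map₂_span_span]
  congr 1
  ext x
  constructor
  · intro hx
    obtain ⟨y, z, hy, -, rfl⟩ := hx.exists_eq_mul_of_two_le mul_assoc (by omega)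
    exact ⟨y, hy, z, trivial, rfl⟩
  · rintro ⟨y, hy, z, -, rfl⟩
    exact hy.mul (IsWord.base (Set.mem_univ z))

theorem spanPow_succ_antitone : Antitone fun k => spanPow R A (k + 1) := by
  refine antitone_nat_of_succ_le fun k => ?_
  induction k with
  | zero => simp [spanPow_one]
  | succ k ih =>
    exact (spanPow_succ_succ (k + 1)).le.trans
      ((map₂_le_map₂_left ih).trans (spanPow_succ_succ k).ge)

theorem le_spanPow_of_le_map₂_mul_top {Y : Submodule R A} (hY : Y ≤ map₂ (mul R A) Y ⊤) (k : ℕ) :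
    Y ≤ spanPow R A (k + 1) := by
  induction k with
  | zero => simp [spanPow_one]
  | succ k ih => exact hY.trans ((map₂_le_map₂_left ih).trans (spanPow_succ_succ k).ge)

theorem map_mulLeft_spanPow_succ_succ (d : A) (m : ℕ) :
    (spanPow R A (m + 2)).map (mulLeft R d) =
      map₂ (mul R A) ((spanPow R A (m + 1)).map (mulLeft R d)) ⊤ := by
  rw [spanPow_succ_succ, map_map₂, map₂_map_left]
  congr 1
  ext x y
  simp [mul_assoc]

theorem eq_bot_of_map₂_mul_top_eq_bot (h1 : ∀ b : A, (∀ x : A, b * x = 0) → b = 0)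
    {Y : Submodule R A} (hY : map₂ (mul R A) Y ⊤ = ⊥) : Y = ⊥ :=
  eq_bot_iff.mpr fun y hy => (mem_bot R).mpr <| h1 y fun x => by
    simpa [hY] using apply_mem_map₂ (mul R A) hy (mem_top (x := x))

end SpanPow

theorem eq_zero_of_map_mulLeft_spanPow_le {F B : Type*} [Field F] [NonUnitalRing B] [Module F B]
    [SMulCommClass F B B] [IsScalarTower F B B]
    (h1 : ∀ b : B, (∀ x : B, b * x = 0) → b = 0)
    (h2 : ∀ b : B, (∀ s, 1 ≤ s → b ∈ spanPow F B s) → b = 0)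
    {d : B} {W : Submodule F B} [FiniteDimensional F W] {s : ℕ}
    (hW : (spanPow F B (s + 1)).map (mulLeft F d) ≤ W) : d = 0 := by
  set Y : ℕ → Submodule F B := fun k => (spanPow F B (k + 1)).map (mulLeft F d)
  have hY_anti : Antitone Y := fun k l hkl => map_mono (spanPow_succ_antitone hkl)
  have hY_succ (k : ℕ) : Y (k + 1) = map₂ (mul F B) (Y k) ⊤ := map_mulLeft_spanPow_succ_succ d k
  have hY_fin (k : ℕ) : FiniteDimensional F (Y (s + k)) :=
    finiteDimensional_of_le ((hY_anti (Nat.le_add_right s k)).trans hW)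
  set a := Function.argmin fun k => finrank F (Y (s + k))
  set t := s + a
  have : FiniteDimensional F (Y t) := hY_fin a
  have hY_stable : Y (t + 1) = Y t :=
    eq_of_le_of_finrank_le (hY_anti t.le_succ)
      (Function.argmin_le (fun k => finrank F (Y (s + k))) (a + 1))
  have hYt : Y t = ⊥ := by
    refine eq_bot_iff.mpr fun y hy => (mem_bot F).mpr <| h2 y fun k hk => ?_
    obtain ⟨k, rfl⟩ := Nat.exists_eq_add_of_le' hk
    exact le_spanPow_of_le_map₂_mul_top ((hY_succ t).symm.trans hY_stable).ge k hy
  have hY0 : ∀ k, Y k = ⊥ → Y 0 = ⊥ := by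
    intro k
    induction k with
    | zero => exact id
    | succ k ih =>
      exact fun hk => ih (eq_bot_of_map₂_mul_top_eq_bot h1 ((hY_succ k).symm.trans hk))
  refine h1 d fun x => ?_
  simpa using (hY0 t hYt).le ⟨x, by simp [spanPow_one], rfl⟩

/-- **Lemma 11.** Let `F` be an infinite field and `B` an associative `F`-algebra with zero
left annihilator (`{b : bB = 0} = 0`) and `⋂_{s ≥ 1} B^s = (0)`. Then for arbitrary linearly
independent `b₁, …, b_n ∈ B` and arbitrary `s ≥ 1` there exists `b ∈ B^s` such that
`b₁b, …, b_nb` are linearly independent. -/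
theorem lemma11_independence
    (F : Type*) [Field F] [Infinite F]
    (B : Type*) [NonUnitalRing B] [Module F B] [SMulCommClass F B B] [IsScalarTower F B B]
    (h1 : ∀ b : B, (∀ x : B, b * x = 0) → b = 0)
    (h2 : ∀ b : B,
      (∀ s : ℕ, 1 ≤ s →
        b ∈ Submodule.span F {x : B | IsWord (· * ·) (Set.univ : Set B) s x}) → b = 0) :
    ∀ (n : ℕ) (b : Fin n → B), LinearIndependent F b → ∀ s : ℕ, 1 ≤ s →
      ∃ c ∈ Submodule.span F {x : B | IsWord (· * ·) (Set.univ : Set B) s x},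
        LinearIndependent F (fun i => b i * c) := by
  intro n b hb s hs
  obtain ⟨s, rfl⟩ := Nat.exists_eq_add_of_le' hs
  let Ψ := Fintype.linearCombination F b
  let R : B → (Fin n → F) →ₗ[F] B := fun c => mulRight F c ∘ₗ Ψ
  have hR_add (c c' : B) (ξ : F) : R (c + ξ • c') = R c + ξ • R c' := by
    ext; simp [R, mul_add, mul_smul_comm]
  let κ : B → ℕ := fun c => finrank F (ker (R c))
  set c₀ := Function.argminOn κ (spanPow F B (s + 1) : Set B) ⟨0, zero_mem _⟩
  have hc₀ : c₀ ∈ spanPow F B (s + 1) := Function.argminOn_mem _ _ _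
  refine ⟨c₀, hc₀, ?_⟩
  have hR_c₀ : Fintype.linearCombination F (fun i => b i * c₀) = R c₀ := by
    ext; simp [R, Ψ, Fintype.linearCombination_apply]
  rw [linearIndependent_iff_injective_fintypeLinearCombination, hR_c₀, ← ker_eq_bot, eq_bot_iff]
  intro δ hδ
  have h_range (c : B) (hc : c ∈ spanPow F B (s + 1)) : (ker (R c₀)).map (R c) ≤ range (R c₀) :=
    map_ker_le_range_of_forall_finrank_ker_le fun ξ => by
      rw [← hR_add]
      exact Function.argminOn_le κ _ (add_mem hc₀ (smul_mem _ ξ hc))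
  have hΨδ : Ψ δ = 0 := eq_zero_of_map_mulLeft_spanPow_le h1 h2 (W := range (R c₀)) <| by
    rintro _ ⟨c, hc, rfl⟩
    exact h_range c hc ⟨δ, hδ, rfl⟩
  exact (mem_bot F).mpr (hb.fintypeLinearCombination_injective (hΨδ.trans (map_zero Ψ).symm))
end

section
/- For an arbitrary Jacobson radical F-algebra A there exist a Jacobson radical F-algebra Ã and an element u ∈ Ã with u³ = 0 such that A is isomorphic to a subalgebra of the right ideal uÃ; similarly, there exist such Ã and u with A isomorphic to a subalgebra of the left ideal Ãu. Moreover, if A is countable-dimensional then Ã may be chosen countable-dimensional. -/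
open TensorProduct

/-!
Take `Ã` to be the algebra of `3 × 3` matrices over the unitization `A¹ = F ⊕ A` whose scalar
parts are strictly upper triangular. It contains `M₃(A)` as an ideal, with quotient the
nilpotent algebra of strictly upper triangular scalar matrices. The ideal `M₃(A)` is radical
because the Jacobson radical of `M₃(A¹)` is the matrix algebra over the Jacobson radical of
`A¹`, which contains `A`; and an extension of a radical algebra by a radical algebra is
radical. With `u = e₀₁ + e₁₂` one has `u³ = 0`, `a e₀₀ = u (a e₁₀)` and `a e₂₂ = (a e₂₁) u`.
-/

lemma isJacobsonRadical_iff_forall_isQuasiregular {R : Type*} [NonUnitalRing R] :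
    IsJacobsonRadical R ↔ ∀ x : R, IsQuasiregular x := by
  refine forall_congr' fun x => ?_
  rw [isQuasiregular_iff]
  exact exists_congr fun y => by rw [add_comm y x]

theorem IsJacobsonRadical.of_surjective {S T G : Type*} [NonUnitalRing S] [NonUnitalRing T]
    [FunLike G S T] [NonUnitalRingHomClass G S T] (f : G) (hf : Function.Surjective f)
    (hT : IsJacobsonRadical T) (hker : ∀ x, f x = 0 → IsQuasiregular x) :
    IsJacobsonRadical S := by
  rw [isJacobsonRadical_iff_forall_isQuasiregular] at hT ⊢
  intro x
  obtain ⟨t, hxt, htx⟩ := isQuasiregular_iff.mp (hT (f x))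
  obtain ⟨y, rfl⟩ := hf t
  -- `x ∘ y` and `y ∘ x` lie in the kernel, so they are units of the circle monoid
  open PreQuasiregular in
  have hxy : IsUnit (equiv x * equiv y) :=
    isQuasiregular_iff'.mp (hker (y + x + x * y) (by simpa using hxt))
  open PreQuasiregular in
  have hyx : IsUnit (equiv y * equiv x) :=
    isQuasiregular_iff'.mp (hker (x + y + y * x) (by simpa using htx))
  rw [isQuasiregular_iff', isUnit_iff_exists_and_exists]
  exact ⟨⟨_, (mul_assoc _ _ _).symm.trans hxy.mul_val_inv⟩,
    ⟨_, (mul_assoc _ _ _).trans hyx.val_inv_mul⟩⟩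

lemma TwoSidedIdeal.isQuasiregular_of_mem_jacobson_bot {R : Type*} [Ring R] {x : R}
    (hx : x ∈ (⊥ : TwoSidedIdeal R).jacobson) : IsQuasiregular x := by
  have left_inv : ∀ x ∈ (⊥ : TwoSidedIdeal R).jacobson, ∃ z, z * (1 + x) = 1 := by
    intro x hx
    obtain ⟨z, hz⟩ := mem_jacobson_iff.mp hx 1
    rw [mem_bot, sub_eq_zero, mul_one] at hz
    exact ⟨z, by rw [mul_one_add, add_comm, hz]⟩
  obtain ⟨z, hz⟩ := left_inv x hx
  -- the left inverse `z = 1 - z * x` is again `1 +` an element of the radical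
  obtain ⟨w, hw⟩ := left_inv (z - 1) <| by
    rw [show z - 1 = -(z * x) by rw [← hz]; noncomm_ring]
    exact neg_mem _ (mul_mem_left _ z x hx)
  have hwz : w * z = 1 := by simpa using hw
  rw [isQuasiregular_iff_isUnit, isUnit_iff_exists_and_exists]
  refine ⟨⟨z, ?_⟩, ⟨z, hz⟩⟩
  rwa [← left_inv_eq_right_inv hwz hz]

namespace Matrix

variable (R : Type*) [CommRing R] (n : ℕ)

def strictUpperTriangular : NonUnitalSubalgebra R (Matrix (Fin n) (Fin n) R) where
  carrier := {M | ∀ i j, j ≤ i → M i j = 0}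
  add_mem' hM hN i j h := by simp [hM i j h, hN i j h]
  zero_mem' _ _ _ := rfl
  mul_mem' {M N} hM hN i j h := by
    rw [mul_apply]
    refine Finset.sum_eq_zero fun k _ => ?_
    rcases le_or_gt k i with hk | hk
    · rw [hM i k hk, zero_mul]
    · rw [hN k j (h.trans hk.le), mul_zero]
  smul_mem' c M hM i j h := by simp [hM i j h]

variable {R n} {M : Matrix (Fin n) (Fin n) R}

lemma pow_apply_eq_zero_of_mem_strictUpperTriangular (hM : M ∈ strictUpperTriangular R n)
    (k : ℕ) {i j : Fin n} (hij : (j : ℕ) < i + k) : (M ^ k) i j = 0 := by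
  induction k generalizing j with
  | zero => exact one_apply_ne (by omega)
  | succ k ih =>
    rw [pow_succ, mul_apply]
    refine Finset.sum_eq_zero fun l _ => ?_
    rcases lt_or_ge (l : ℕ) (i + k) with hl | hl
    · rw [ih hl, zero_mul]
    · rw [hM l j (by omega), mul_zero]

lemma pow_eq_zero_of_mem_strictUpperTriangular (hM : M ∈ strictUpperTriangular R n) :
    M ^ n = 0 :=
  ext fun _ _ => pow_apply_eq_zero_of_mem_strictUpperTriangular hM n (by omega)

lemma pow_succ_mem_strictUpperTriangular (hM : M ∈ strictUpperTriangular R n) (k : ℕ) :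
    M ^ (k + 1) ∈ strictUpperTriangular R n :=
  fun _ _ _ => pow_apply_eq_zero_of_mem_strictUpperTriangular hM (k + 1) (by omega)

theorem isJacobsonRadical_strictUpperTriangular :
    IsJacobsonRadical (strictUpperTriangular R n) := by
  rintro ⟨x, hx⟩
  set y := ∑ k ∈ Finset.range n, (-x) ^ (k + 1)
  have hy : y ∈ strictUpperTriangular R n :=
    sum_mem fun k _ => pow_succ_mem_strictUpperTriangular (neg_mem hx) k
  have h1y : 1 + y = ∑ k ∈ Finset.range (n + 1), (-x) ^ k := by
    rw [Finset.sum_range_succ', pow_zero, add_comm]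
  have hpow : (-x) ^ (n + 1) = 0 := by
    rw [neg_pow, pow_succ x, pow_eq_zero_of_mem_strictUpperTriangular hx, zero_mul, mul_zero]
  have hxy : (1 + x) * (1 + y) = 1 := by
    rw [h1y, ← sub_neg_eq_add, mul_neg_geom_sum, hpow, sub_zero]
  have hyx : (1 + y) * (1 + x) = 1 := by
    rw [h1y, ← sub_neg_eq_add 1 x, geom_sum_mul_neg, hpow, sub_zero]
  refine ⟨⟨y, hy⟩, Subtype.ext ?_, Subtype.ext ?_⟩
  · calc x + y + x * y = (1 + x) * (1 + y) - 1 := by noncomm_ring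
      _ = 0 := by rw [hxy, sub_self]
  · calc x + y + y * x = (1 + y) * (1 + x) - 1 := by noncomm_ring
      _ = 0 := by rw [hyx, sub_self]

end Matrix

namespace Unitization

open Matrix

section

variable {R A : Type*} [CommRing R] [NonUnitalRing A] [Module R A] [IsScalarTower R A A]
  [SMulCommClass R A A]

lemma ker_fstHom_le_jacobson_bot (hA : IsJacobsonRadical A) :
    TwoSidedIdeal.ker (fstHom R A) ≤ (⊥ : TwoSidedIdeal (Unitization R A)).jacobson := by
  intro x hx
  rw [TwoSidedIdeal.mem_jacobson_iff]
  intro y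
  have hx0 : x.fst = 0 := (TwoSidedIdeal.mem_ker _).mp hx
  obtain ⟨b, hb⟩ : ∃ b : A, (b : Unitization R A) = y * x :=
    ⟨(y * x).snd, by ext <;> simp [hx0]⟩
  have hq : IsQuasiregular (y * x) :=
    hb ▸ (isQuasiregular_inr_iff b).mpr (isJacobsonRadical_iff_forall_isQuasiregular.mp hA b)
  obtain ⟨z, hz⟩ := hq.isUnit_one_add.exists_left_inv
  exact ⟨z, by rw [TwoSidedIdeal.mem_bot, ← hz]; noncomm_ring⟩

lemma isQuasiregular_of_mapMatrix_fstHom_eq_zero {n : Type*} [Fintype n] [DecidableEq n]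
    (hA : IsJacobsonRadical A) {M : Matrix n n (Unitization R A)}
    (hM : (fstHom R A).mapMatrix M = 0) : IsQuasiregular M := by
  refine TwoSidedIdeal.isQuasiregular_of_mem_jacobson_bot ?_
  rw [← TwoSidedIdeal.matrix_jacobson_bot, TwoSidedIdeal.mem_matrix]
  exact fun i j => ker_fstHom_le_jacobson_bot hA <|
    (TwoSidedIdeal.mem_ker _).mpr (congr_fun₂ hM i j)

variable (R A) in
def strictUpperScalarMatrices (n : ℕ) :
    NonUnitalSubalgebra R (Matrix (Fin n) (Fin n) (Unitization R A)) :=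
  (strictUpperTriangular R n).comap (fstHom R A).mapMatrix

variable {n : ℕ}

lemma single_inr_mem_strictUpperScalarMatrices (i j : Fin n) (a : A) :
    single i j (a : Unitization R A) ∈ strictUpperScalarMatrices R A n := by
  simp [strictUpperScalarMatrices, zero_mem]

lemma mapMatrix_fstHom_mapMatrix_inlRingHom (N : Matrix (Fin n) (Fin n) R) :
    (fstHom R A).mapMatrix ((inlRingHom R A).mapMatrix N) = N := by
  ext; simp

lemma mapMatrix_inl_mem_strictUpperScalarMatrices {N : Matrix (Fin n) (Fin n) R}
    (hN : N ∈ strictUpperTriangular R n) :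
    (inlRingHom R A).mapMatrix N ∈ strictUpperScalarMatrices R A n :=
  show _ ∈ strictUpperTriangular R n from
    (mapMatrix_fstHom_mapMatrix_inlRingHom (A := A) N).symm ▸ hN

theorem isJacobsonRadical_strictUpperScalarMatrices (hA : IsJacobsonRadical A) :
    IsJacobsonRadical (strictUpperScalarMatrices R A n) := by
  let π : strictUpperScalarMatrices R A n →ₙₐ[R] strictUpperTriangular R n :=
    NonUnitalAlgHom.codRestrict
      ((fstHom R A).mapMatrix.toNonUnitalAlgHom.comp (NonUnitalSubalgebraClass.subtype _)) _
      fun x => x.2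
  refine .of_surjective π (fun t => ?_) isJacobsonRadical_strictUpperTriangular fun x hx => ?_
  · exact ⟨⟨_, mapMatrix_inl_mem_strictUpperScalarMatrices t.2⟩,
      Subtype.ext <| mapMatrix_fstHom_mapMatrix_inlRingHom (A := A) t.1⟩
  · have hx' : (fstHom R A).mapMatrix x.1 = 0 := congrArg Subtype.val hx
    obtain ⟨y, hxy, hyx⟩ :=
      isQuasiregular_iff.mp (isQuasiregular_of_mapMatrix_fstHom_eq_zero hA hx')
    have hy : (fstHom R A).mapMatrix y = 0 := by
      have := congrArg (fstHom R A).mapMatrix hxy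
      rwa [map_add, map_add, map_mul, hx', zero_mul, add_zero, add_zero, map_zero] at this
    exact isQuasiregular_iff.mpr ⟨⟨y, by simp [strictUpperScalarMatrices, hy, zero_mem]⟩,
      Subtype.ext hxy, Subtype.ext hyx⟩

variable (R) in
def singleInr (i j : Fin n) (a : A) : strictUpperScalarMatrices R A n :=
  ⟨single i j (a : Unitization R A), single_inr_mem_strictUpperScalarMatrices i j a⟩

variable (R n) in
def singleInrHom (i : Fin n) : A →ₙₐ[R] strictUpperScalarMatrices R A n where
  toFun := singleInr R i i
  map_smul' c a := Subtype.ext <| by simp [singleInr, smul_single]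
  map_zero' := Subtype.ext <| by simp [singleInr]
  map_add' a b := Subtype.ext <| by simp [singleInr, single_add]
  map_mul' a b := Subtype.ext <| by simp [singleInr]

lemma singleInrHom_injective (i : Fin n) : Function.Injective (singleInrHom R n (A := A) i) :=
  fun a b h => by simpa [singleInrHom, singleInr] using congrArg (fun x => x.1 i i) h

variable (R A) in
def shift : strictUpperScalarMatrices R A 3 :=
  ⟨single 0 1 1 + single 1 2 1, by
    have hN : single 0 1 1 + single 1 2 1 ∈ strictUpperTriangular R 3 := by
      intro i j h
      fin_cases i <;> fin_cases j <;> simp_all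
    have := mapMatrix_inl_mem_strictUpperScalarMatrices (A := A) hN
    rw [map_add] at this
    simpa [map_single] using this⟩

lemma shift_mul_shift_mul_shift : shift R A * shift R A * shift R A = 0 :=
  Subtype.ext <| by simp [shift, add_mul, mul_add]

lemma singleInrHom_zero_eq_shift_mul (a : A) :
    singleInrHom R 3 0 a = shift R A * singleInr R 1 0 a :=
  Subtype.ext <| by simp [shift, singleInrHom, singleInr, add_mul]

lemma singleInrHom_two_eq_mul_shift (a : A) :
    singleInrHom R 3 2 a = singleInr R 2 1 a * shift R A :=
  Subtype.ext <| by simp [shift, singleInrHom, singleInr, mul_add]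

end

open Cardinal in
lemma rank_strictUpperScalarMatrices_le_aleph0 {F A : Type*} [Field F] [NonUnitalRing A]
    [Module F A] [IsScalarTower F A A] [SMulCommClass F A A] {n : ℕ}
    (hA : Module.rank F A ≤ ℵ₀) : Module.rank F (strictUpperScalarMatrices F A n) ≤ ℵ₀ := by
  refine (Submodule.rank_le (strictUpperScalarMatrices F A n).toSubmodule).trans ?_
  rw [rank_matrix_module, (linearEquiv F F A).rank_eq, rank_prod, Module.rank_self]
  simp only [mk_fintype, Fintype.card_fin, lift_natCast, lift_one, lift_uzero]
  have hU : 1 + Cardinal.lift (Module.rank F A) ≤ ℵ₀ :=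
    add_le_aleph0.mpr ⟨one_le_aleph0, lift_le_aleph0.mpr hA⟩
  exact aleph0_mul_aleph0 ▸ mul_le_mul' (mul_lt_aleph0 natCast_lt_aleph0 natCast_lt_aleph0).le hU

end Unitization

/-- **Lemma 6.** For an arbitrary Jacobson radical `F`-algebra `A` there exist a Jacobson
radical `F`-algebra `Ã` and `u ∈ Ã` with `u³ = 0` such that `A` embeds in the right ideal
`uÃ`; similarly for the left ideal `Ãu`. Moreover, if `A` is countable-dimensional then `Ã`
may be chosen countable-dimensional. -/
theorem lemma6_radical_ideal_embedding
    (F : Type u) [Field F] (A : Type v)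
    [NonUnitalRing A] [Module F A] [SMulCommClass F A A] [IsScalarTower F A A]
    (hJ : IsJacobsonRadical A) :
    ((∃ (At : Type (max u v)) (_ : NonUnitalRing At) (_ : Module F At)
        (_ : SMulCommClass F At At) (_ : IsScalarTower F At At),
      IsJacobsonRadical At ∧ ∃ u : At, u * u * u = 0 ∧
        ∃ φ : A →ₙₐ[F] At, Function.Injective φ ∧ ∀ a : A, ∃ x : At, φ a = u * x) ∧
    (∃ (At : Type (max u v)) (_ : NonUnitalRing At) (_ : Module F At)
        (_ : SMulCommClass F At At) (_ : IsScalarTower F At At),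
      IsJacobsonRadical At ∧ ∃ u : At, u * u * u = 0 ∧
        ∃ φ : A →ₙₐ[F] At, Function.Injective φ ∧ ∀ a : A, ∃ x : At, φ a = x * u)) ∧
    (Module.rank F A ≤ Cardinal.aleph0 →
      (∃ (At : Type (max u v)) (_ : NonUnitalRing At) (_ : Module F At)
          (_ : SMulCommClass F At At) (_ : IsScalarTower F At At),
        Module.rank F At ≤ Cardinal.aleph0 ∧
        IsJacobsonRadical At ∧ ∃ u : At, u * u * u = 0 ∧
          ∃ φ : A →ₙₐ[F] At, Function.Injective φ ∧ ∀ a : A, ∃ x : At, φ a = u * x) ∧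
      (∃ (At : Type (max u v)) (_ : NonUnitalRing At) (_ : Module F At)
          (_ : SMulCommClass F At At) (_ : IsScalarTower F At At),
        Module.rank F At ≤ Cardinal.aleph0 ∧
        IsJacobsonRadical At ∧ ∃ u : At, u * u * u = 0 ∧
          ∃ φ : A →ₙₐ[F] At, Function.Injective φ ∧ ∀ a : A, ∃ x : At, φ a = x * u)) := by
  open Unitization in
  have hrad := isJacobsonRadical_strictUpperScalarMatrices (R := F) (n := 3) hJ
  open Unitization in
  have right : ∃ u, u * u * u = 0 ∧ ∃ φ : A →ₙₐ[F] strictUpperScalarMatrices F A 3,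
      Function.Injective φ ∧ ∀ a, ∃ x, φ a = u * x :=
    ⟨shift F A, shift_mul_shift_mul_shift, singleInrHom F 3 0, singleInrHom_injective 0,
      fun a => ⟨_, singleInrHom_zero_eq_shift_mul a⟩⟩
  open Unitization in
  have left : ∃ u, u * u * u = 0 ∧ ∃ φ : A →ₙₐ[F] strictUpperScalarMatrices F A 3,
      Function.Injective φ ∧ ∀ a, ∃ x, φ a = x * u :=
    ⟨shift F A, shift_mul_shift_mul_shift, singleInrHom F 3 2, singleInrHom_injective 2,
      fun a => ⟨_, singleInrHom_two_eq_mul_shift a⟩⟩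
  refine ⟨⟨⟨_, _, _, inferInstance, inferInstance, hrad, right⟩,
    ⟨_, _, _, inferInstance, inferInstance, hrad, left⟩⟩, fun hA => ?_⟩
  have hrank := Unitization.rank_strictUpperScalarMatrices_le_aleph0 (n := 3) hA
  exact ⟨⟨_, _, _, inferInstance, inferInstance, hrank, hrad, right⟩,
    ⟨_, _, _, inferInstance, inferInstance, hrank, hrad, left⟩⟩
end

section
/- Let A be a stable nil (respectively, stable algebraic) F-algebra. Then for an arbitrary F-algebra B, the algebra S(A,B) is nil (respectively, algebraic). -/
open TensorProduct

/-! If `f(B) ⊆ V ⊗ A` and `v₁, …, vₙ` span `V`, then `f = E ∘ φ` with `E c = ∑ vᵢ ⊗ cᵢ` and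
`φ : B → Aⁿ`. The matrix `M ∈ Mₙ(A)` with `f(vᵢ) = ∑ₖ vₖ ⊗ Mₖᵢ` then satisfies
`f^(k+1) = E ∘ M^k ∘ φ` for `k ≥ 1`, so `M^k = 0` forces `f^(k+1) = 0`, and a relation `p(M) = 0`
with `p(0) = 0` gives `(X p)(f) = 0`. -/

namespace Polynomial

lemma sum_mul_X_smul_eq_map_sum_smul {R P Q : Type*} [CommSemiring R] [AddCommMonoid P]
    [Module R P] [AddCommMonoid Q] [Module R Q] (Θ : P →ₗ[R] Q) {x : ℕ → Q} {y : ℕ → P}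
    (hxy : ∀ i ≠ 0, x (i + 1) = Θ (y i)) {p : R[X]} (hp : p.coeff 0 = 0) :
    ((p * X).sum fun i c => c • x i) = Θ (p.sum fun i c => c • y i) := by
  have hdeg : (p * X).natDegree < p.natDegree + 1 + 1 :=
    Nat.lt_succ_of_le (natDegree_mul_le.trans (Nat.add_le_add_left natDegree_X_le _))
  rw [sum_over_range' _ (fun i => zero_smul R (x i)) _ hdeg, Finset.sum_range_succ',
    sum_over_range' p (fun i => zero_smul R (y i)) _ (Nat.lt_succ_self _), map_sum]
  simp only [coeff_mul_X, coeff_mul_X_zero, zero_smul, add_zero]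
  refine Finset.sum_congr rfl fun i _ => ?_
  rcases eq_or_ne i 0 with rfl | hi
  · simp [hp]
  · rw [hxy i hi, map_smul]

end Polynomial

section SumTmul

variable {R M N I : Type*} [CommSemiring R] [AddCommMonoid M] [Module R M] [AddCommMonoid N]
  [Module R N] [Fintype I]

def sumTmul (ι : I → M) : (I → N) →ₗ[R] M ⊗[R] N :=
  ∑ i, TensorProduct.mk R M N (ι i) ∘ₗ LinearMap.proj i

lemma sumTmul_apply (ι : I → M) (c : I → N) :
    sumTmul (R := R) ι c = ∑ i, ι i ⊗ₜ[R] c i := by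
  simp [sumTmul]

lemma range_rTensor_subtype_le_range_sumTmul {V : Submodule R M} {ι : I → M}
    (hι : V ≤ Submodule.span R (Set.range ι)) :
    LinearMap.range (LinearMap.rTensor N V.subtype) ≤ LinearMap.range (sumTmul (N := N) ι) := by
  rintro _ ⟨x, rfl⟩
  induction x using TensorProduct.induction_on with
  | zero => simp
  | tmul v n =>
    obtain ⟨c, hc⟩ := (Submodule.mem_span_range_iff_exists_fun R).mp (hι v.2)
    refine ⟨fun i => c i • n, ?_⟩
    simp [sumTmul_apply, ← hc, TensorProduct.sum_tmul, TensorProduct.smul_tmul]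
  | add x y hx hy => rw [map_add]; exact add_mem hx hy

end SumTmul

section MatrixCoordinates

variable {F : Type*} [Field F] {A : Type*} [NonUnitalRing A] [Module F A]
  {B : Type*} [NonUnitalRing B] [Module F B]

lemma exists_eq_sumTmul_comp_of_mem_SAB {f : B →ₗ[F] B ⊗[F] A} (hf : f ∈ SAB F A B) :
    ∃ (n : ℕ) (ι : Fin n → B) (φ : B →ₗ[F] Fin n → A), f = sumTmul ι ∘ₗ φ := by
  obtain ⟨V, hV, hfV⟩ := hf
  obtain ⟨n, ι, hι⟩ :=
    Submodule.fg_iff_exists_fin_generating_family.mp ((Submodule.fg_iff_finiteDimensional V).2 hV)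
  have hfι : ∀ b, f b ∈ LinearMap.range (sumTmul (N := A) ι) := fun b =>
    range_rTensor_subtype_le_range_sumTmul hι.ge (hfV ⟨b, rfl⟩)
  obtain ⟨φ, hφ⟩ := Module.projective_lifting_property (sumTmul ι).rangeRestrict
    (f.codRestrict _ hfι) (LinearMap.surjective_rangeRestrict _)
  exact ⟨n, ι, φ, LinearMap.ext fun b => congr_arg Subtype.val (LinearMap.congr_fun hφ b).symm⟩

variable [SMulCommClass F A A] [IsScalarTower F A A] {I : Type*} [Fintype I]

def coordMatrix (ι : I → B) (φ : B →ₗ[F] I → A) : Matrix I I A :=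
  Matrix.of fun k i => φ (ι i) k

lemma wrMul_sumTmul_comp (ι : I → B) (φ ψ : B →ₗ[F] I → A) :
    wrMul F A B (sumTmul ι ∘ₗ φ) (sumTmul ι ∘ₗ ψ) =
      sumTmul ι ∘ₗ Matrix.mulVecBilin F F (coordMatrix ι φ) ∘ₗ ψ := by
  ext b
  simp only [wrMul, LinearMap.coe_comp, LinearEquiv.coe_coe, Function.comp_apply, sumTmul_apply,
    map_sum, LinearMap.rTensor_tmul, sum_tmul, assoc_tmul, LinearMap.lTensor_tmul,
    LinearMap.mul'_apply, coordMatrix, Matrix.mulVecBilin_apply, Matrix.mulVec, dotProduct,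
    Matrix.of_apply, tmul_sum]
  exact Finset.sum_comm

def matrixAction (ι : I → B) (φ : B →ₗ[F] I → A) : Matrix I I A →ₗ[F] B →ₗ[F] B ⊗[F] A :=
  LinearMap.llcomp F B (I → A) (B ⊗[F] A) (sumTmul ι) ∘ₗ LinearMap.lcomp F (I → A) φ ∘ₗ
    Matrix.mulVecBilin F F

lemma matrixAction_apply (ι : I → B) (φ : B →ₗ[F] I → A) (N : Matrix I I A) :
    matrixAction ι φ N = sumTmul ι ∘ₗ Matrix.mulVecBilin F F N ∘ₗ φ :=
  rfl

lemma pw_wrMul_sumTmul_comp (ι : I → B) (φ : B →ₗ[F] I → A) {k : ℕ} (hk : k ≠ 0) :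
    pw (wrMul F A B) (sumTmul ι ∘ₗ φ) (k + 1) =
      matrixAction ι φ (pw (· * ·) (coordMatrix ι φ) k) := by
  obtain ⟨j, rfl⟩ := Nat.exists_eq_succ_of_ne_zero hk
  change pwAux (wrMul F A B) (sumTmul ι ∘ₗ φ) (j + 1) =
    matrixAction ι φ (pwAux (· * ·) (coordMatrix ι φ) j)
  clear hk
  induction j with
  | zero => exact wrMul_sumTmul_comp ι φ φ
  | succ j ih =>
    change wrMul F A B _ (pwAux (wrMul F A B) (sumTmul ι ∘ₗ φ) (j + 1)) = _
    rw [ih, matrixAction_apply, matrixAction_apply, wrMul_sumTmul_comp]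
    ext b
    simp only [LinearMap.comp_apply, Matrix.mulVecBilin_apply, Matrix.mulVec_mulVec]
    rfl

end MatrixCoordinates

theorem lemma10_SAB_nil_algebraic_general
    (F : Type*) [Field F]
    (A : Type*) [NonUnitalRing A] [Module F A] [SMulCommClass F A A] [IsScalarTower F A A]
    (B : Type*) [NonUnitalRing B] [Module F B] :
    (IsStableNil A → IsNilMul (wrMul F A B) (SAB F A B)) ∧
    (IsStableAlgebraic F A → IsAlgebraicMul F (wrMul F A B) (SAB F A B)) := by
  constructor
  · rintro hA f hf
    obtain ⟨n, ι, φ, rfl⟩ := exists_eq_sumTmul_comp_of_mem_SAB hf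
    obtain ⟨m, hm, hM⟩ := hA n (coordMatrix ι φ) trivial
    refine ⟨m + 1, by omega, ?_⟩
    rw [pw_wrMul_sumTmul_comp ι φ (by omega), hM, map_zero]
  · rintro hA f hf
    obtain ⟨n, ι, φ, rfl⟩ := exists_eq_sumTmul_comp_of_mem_SAB hf
    obtain ⟨p, hp, hp0, hM⟩ := hA n (coordMatrix ι φ) trivial
    refine ⟨p * Polynomial.X, mul_ne_zero hp Polynomial.X_ne_zero,
      Polynomial.coeff_mul_X_zero p, ?_⟩
    rw [Polynomial.sum_mul_X_smul_eq_map_sum_smul (matrixAction ι φ)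
      (fun _ hk => pw_wrMul_sumTmul_comp ι φ hk) hp0, hM, map_zero]

/-- **Lemma 10.** Let `A` be a stable nil (respectively, stable algebraic) `F`-algebra. Then
for an arbitrary `F`-algebra `B`, the algebra `S(A,B)` is nil (respectively, algebraic). -/
theorem lemma10_SAB_nil_algebraic
    (F : Type*) [Field F]
    (A : Type*) [NonUnitalRing A] [Module F A] [SMulCommClass F A A] [IsScalarTower F A A]
    (B : Type*) [NonUnitalRing B] [Module F B] [SMulCommClass F B B] [IsScalarTower F B B] :
    (IsStableNil A → IsNilMul (wrMul F A B) (SAB F A B)) ∧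
    (IsStableAlgebraic F A → IsAlgebraicMul F (wrMul F A B) (SAB F A B)) :=
  lemma10_SAB_nil_algebraic_general F A B
end
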